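/- arXiv:1504.08223 — 2 statements merged into one kernel-verified Lean document; each statement's English description precedes it below -/
import Mathlib

section
/- Let 𝔛 be a Bourgain–Delbaen space. Define c_γ* = 0 for γ ∈ Δ_0 and c_γ* = e_γ* ∘ i_q ∘ r_q for γ ∈ Δ_{q+1} (q ≥ 0), and set d_γ* = e_γ* − c_γ*. Then the family (d_γ*)_{γ∈Γ} is biorthogonal to the family (d_γ)_{γ∈Γ}: d_γ*(d_{γ'}) = 1 if γ = γ' and d_γ*(d_{γ'}) = 0 if γ ≠ γ'. -/
open scoped ENNReal
open Filter Topology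

set_option maxHeartbeats 1000000
set_option synthInstance.maxHeartbeats 400000

noncomputable section

/-- `ℓ∞(Γ)`. -/
abbrev Linf (Γ : Type*) : Type _ := lp (fun _ : Γ => ℝ) ∞

namespace BD

variable {Γ : Type*}

/-- The evaluation map on `ℓ∞(Γ)`, as a linear map. -/
def evalLM (γ : Γ) : Linf Γ →ₗ[ℝ] ℝ where
  toFun f := f γ
  map_add' f g := by simp
  map_smul' c f := by simp

/-- The evaluation functional `e_γ^*` on `ℓ∞(Γ)`. -/
def evalL (γ : Γ) : Linf Γ →L[ℝ] ℝ :=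
  LinearMap.mkContinuous (evalLM γ) 1 fun f => by
    rw [one_mul]
    exact lp.norm_apply_le_norm ENNReal.top_ne_zero f γ

/-- The restriction map `ℓ∞(Γ) → ℓ∞(A)`, as a linear map. -/
def restrLM (A : Finset Γ) : Linf Γ →ₗ[ℝ] (↥A → ℝ) where
  toFun f γ := f γ.1
  map_add' f g := by ext γ; simp
  map_smul' c f := by ext γ; simp

/-- The restriction operator `r_A : ℓ∞(Γ) → ℓ∞(A)` for a finite set `A ⊆ Γ`. -/
def restrCLM (A : Finset Γ) : Linf Γ →L[ℝ] (↥A → ℝ) :=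
  LinearMap.mkContinuous (restrLM A) 1 fun f => by
    rw [one_mul]
    refine (pi_norm_le_iff_of_nonneg (norm_nonneg f)).2 fun γ => ?_
    exact lp.norm_apply_le_norm ENNReal.top_ne_zero f γ.1

/-- The data defining a Bourgain-Delbaen space: a strictly increasing sequence of
nonempty finite subsets of `Γ` covering `Γ`, together with a uniformly bounded compatible
sequence of extension operators. -/
structure System (Γ : Type*) where
  Γs : ℕ → Finset Γ
  strict : StrictMono Γs
  nonempty : ∀ q, (Γs q).Nonempty
  covers : ∀ γ : Γ, ∃ q, γ ∈ Γs q
  i : ∀ q, (↥(Γs q) → ℝ) →L[ℝ] Linf Γ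
  extension : ∀ q (x : ↥(Γs q) → ℝ) (γ : ↥(Γs q)), i q x γ.1 = x γ
  compat : ∀ p q, p < q → ∀ x : ↥(Γs p) → ℝ, i p x = i q (restrCLM (Γs q) (i p x))
  bdd : BddAbove (Set.range fun q => ‖i q‖)

/-- `C = sup_q ‖i_q‖`. -/
def System.C (S : System Γ) : ℝ := ⨆ q, ‖S.i q‖

/-- `Δ_0 = Γ_0`, `Δ_q = Γ_q \ Γ_{q-1}`. -/
def System.Δ (S : System Γ) : ℕ → Finset Γ := fun q =>
  letI := Classical.decEq Γ
  match q with
  | 0 => S.Γs 0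
  | q + 1 => S.Γs (q + 1) \ S.Γs q

/-- The unique `q` with `γ ∈ Δ_q`. -/
def System.rk (S : System Γ) (γ : Γ) : ℕ :=
  letI := Classical.decEq Γ
  Nat.find (S.covers γ)

/-- The vector `d_γ = i_q (e_γ)` for `γ ∈ Δ_q`. -/
def System.dvec (S : System Γ) (γ : Γ) : Linf Γ :=
  letI := Classical.decEq Γ
  S.i (S.rk γ) fun δ => if (δ : Γ) = γ then 1 else 0

/-- `M_q = span {d_γ : γ ∈ Δ_q}`. -/
def System.M (S : System Γ) (q : ℕ) : Submodule ℝ (Linf Γ) :=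
  Submodule.span ℝ (S.dvec '' (S.Δ q : Set Γ))

/-- The Bourgain-Delbaen space: the closed linear span of the `d_γ`'s in `ℓ∞(Γ)`. -/
def System.space (S : System Γ) : Submodule ℝ (Linf Γ) :=
  (Submodule.span ℝ (Set.range S.dvec)).topologicalClosure


section ShortcutInstances

noncomputable instance (priority := 10000) instLinfNACG (Γ : Type*) :
    NormedAddCommGroup (Linf Γ) := inferInstance

noncomputable instance (priority := 10000) instLinfNS (Γ : Type*) :
    NormedSpace ℝ (Linf Γ) := inferInstance

noncomputable instance (priority := 10000) instSpaceNACG (S : System Γ) :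
    NormedAddCommGroup ↥S.space := inferInstance

noncomputable instance (priority := 10000) instSpaceNS (S : System Γ) :
    NormedSpace ℝ ↥S.space := inferInstance

noncomputable instance (priority := 10000) instDualNACG (S : System Γ) :
    NormedAddCommGroup (↥S.space →L[ℝ] ℝ) := inferInstance

noncomputable instance (priority := 10000) instDualNS (S : System Γ) :
    NormedSpace ℝ (↥S.space →L[ℝ] ℝ) := inferInstance

end ShortcutInstances

lemma dvec_mem (S : System Γ) (γ : Γ) : S.dvec γ ∈ S.space :=
  Submodule.le_topologicalClosure _ (Submodule.subset_span ⟨γ, rfl⟩)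

end BD

namespace BD

/-- The evaluation functional `e_γ^*` restricted to the Bourgain–Delbaen space. -/
def evalS (S : System Γ) (γ : Γ) : ↥S.space →L[ℝ] ℝ :=
  (evalL γ).comp S.space.subtypeL

/-- The functional `e_γ^* ∘ i_p ∘ r_p` on the Bourgain–Delbaen space. -/
def cAt (S : System Γ) (p : ℕ) (γ : Γ) : ↥S.space →L[ℝ] ℝ :=
  ((evalL γ).comp ((S.i p).comp (restrCLM (S.Γs p)))).comp S.space.subtypeL

/-- `c_γ^* = 0` if `γ ∈ Δ_0`, and `c_γ^* = e_γ^* ∘ i_q ∘ r_q` if `γ ∈ Δ_{q+1}`. -/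
def cstar (S : System Γ) (γ : Γ) : ↥S.space →L[ℝ] ℝ :=
  if S.rk γ = 0 then 0 else cAt S (S.rk γ - 1) γ

/-- `d_γ^* = e_γ^* - c_γ^*`. -/
def dstar (S : System Γ) (γ : Γ) : ↥S.space →L[ℝ] ℝ :=
  evalS S γ - cstar S γ

end BD



namespace BD
variable {Γ : Type*}

lemma System.mem_rk (S : System Γ) (γ : Γ) : γ ∈ S.Γs (S.rk γ) := by
  unfold System.rk
  letI := Classical.decEq Γ
  exact Nat.find_spec (S.covers γ)

lemma System.notMem_of_lt_rk (S : System Γ) {γ : Γ} {p : ℕ} (h : p < S.rk γ) :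
    γ ∉ S.Γs p := by
  unfold System.rk at h
  letI := Classical.decEq Γ
  exact Nat.find_min (S.covers γ) h

lemma System.monoΓ (S : System Γ) : Monotone S.Γs := S.strict.monotone

lemma evalS_apply (S : System Γ) (γ : Γ) (x : ↥S.space) :
    evalS S γ x = (x : Linf Γ) γ := rfl

lemma cAt_apply (S : System Γ) (p : ℕ) (γ : Γ) (x : ↥S.space) :
    cAt S p γ x = S.i p (fun δ => (x : Linf Γ) δ.1) γ := rfl

lemma System.compat' (S : System Γ) {p q : ℕ} (h : p ≤ q) (x : ↥(S.Γs p) → ℝ) :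
    S.i p x = S.i q (restrCLM (S.Γs q) (S.i p x)) := by
  rcases h.lt_or_eq with h | rfl
  · exact S.compat p q h x
  · congr 1
    funext δ
    exact (S.extension p x δ).symm

lemma System.dvec_self (S : System Γ) (γ : Γ) : (S.dvec γ : Linf Γ) γ = 1 := by
  letI := Classical.decEq Γ
  unfold System.dvec
  have h := S.extension (S.rk γ)
    (fun δ => if (δ : Γ) = γ then (1 : ℝ) else 0) ⟨γ, S.mem_rk γ⟩
  rw [h]
  simp

lemma System.dvec_ne (S : System Γ) {γ δ : Γ} (hne : δ ≠ γ)
    (h : δ ∈ S.Γs (S.rk γ)) : (S.dvec γ : Linf Γ) δ = 0 := by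
  letI := Classical.decEq Γ
  unfold System.dvec
  have h2 := S.extension (S.rk γ)
    (fun δ => if (δ : Γ) = γ then (1 : ℝ) else 0) ⟨δ, h⟩
  rw [h2]
  simp [hne]

lemma System.dvec_eq (S : System Γ) (γ : Γ) {p : ℕ} (h : S.rk γ ≤ p) :
    S.dvec γ = S.i p (fun δ : ↥(S.Γs p) => (S.dvec γ : Linf Γ) δ.1) := by
  letI := Classical.decEq Γ
  have h2 := S.compat' h (fun δ => if (δ : Γ) = γ then (1 : ℝ) else 0)
  unfold System.dvec
  exact h2

end BD

/-- In a Bourgain–Delbaen space, the functionals `(d_γ^*)_{γ∈Γ}` are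
biorthogonal to the vectors `(d_γ)_{γ∈Γ}`. -/
theorem statement5 {Γ : Type*} (S : BD.System Γ) (γ γ' : Γ) :
    (γ = γ' → BD.dstar S γ ⟨S.dvec γ', BD.dvec_mem S γ'⟩ = 1) ∧
    (γ ≠ γ' → BD.dstar S γ ⟨S.dvec γ', BD.dvec_mem S γ'⟩ = 0) := by
  classical
  constructor
  · rintro rfl
    simp only [BD.dstar, ContinuousLinearMap.sub_apply, BD.evalS_apply]
    have h2 : BD.cstar S γ ⟨S.dvec γ, BD.dvec_mem S γ⟩ = 0 := by
      unfold BD.cstar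
      rcases Nat.eq_zero_or_pos (S.rk γ) with h0 | hpos
      · simp [h0]
      · rw [if_neg hpos.ne', BD.cAt_apply]
        have hz : (fun δ : ↥(S.Γs (S.rk γ - 1)) => (S.dvec γ : Linf Γ) δ.1)
            = 0 := by
          funext δ
          have hmem : (δ : Γ) ∈ S.Γs (S.rk γ) := S.monoΓ (Nat.sub_le _ _) δ.2
          have hne : (δ : Γ) ≠ γ := fun he =>
            S.notMem_of_lt_rk (Nat.sub_lt hpos one_pos) (by have h2 := δ.2; rw [he] at h2; exact h2)
          exact S.dvec_ne hne hmem
        rw [hz, map_zero]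
        simp
    rw [S.dvec_self γ, h2, sub_zero]
  · intro hne
    simp only [BD.dstar, ContinuousLinearMap.sub_apply, BD.evalS_apply]
    unfold BD.cstar
    rcases Nat.eq_zero_or_pos (S.rk γ) with h0 | hpos
    · rw [if_pos h0]
      have hmem : γ ∈ S.Γs (S.rk γ') :=
        S.monoΓ (Nat.zero_le _) (h0 ▸ S.mem_rk γ)
      rw [S.dvec_ne hne hmem]
      simp
    · rw [if_neg hpos.ne', BD.cAt_apply]
      set p := S.rk γ - 1 with hp
      rcases le_or_gt (S.rk γ') p with hle | hlt
      · rw [show (S.i p fun δ : ↥(S.Γs p) => (S.dvec γ' : Linf Γ) δ.1)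
            = S.dvec γ' from (S.dvec_eq γ' hle).symm, sub_self]
      · have hq_le : S.rk γ ≤ S.rk γ' := by omega
        have hmem : γ ∈ S.Γs (S.rk γ') := S.monoΓ hq_le (S.mem_rk γ)
        have hz : (fun δ : ↥(S.Γs p) => (S.dvec γ' : Linf Γ) δ.1) = 0 := by
          funext δ
          have hmemδ : (δ : Γ) ∈ S.Γs (S.rk γ') := S.monoΓ hlt.le δ.2
          have hneδ : (δ : Γ) ≠ γ' := fun he =>
            S.notMem_of_lt_rk hlt (by have h2 := δ.2; rw [he] at h2; exact h2)
          exact S.dvec_ne hneδ hmemδ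
        rw [S.dvec_ne hne hmem, hz, map_zero]
        simp
end
end

section
/- Let 𝔛 be a Bourgain–Delbaen space with constant C = sup_q ‖i_q‖, and define c_γ* = 0 for γ ∈ Δ_0, c_γ* = e_γ* ∘ i_q ∘ r_q for γ ∈ Δ_{q+1}, and d_γ* = e_γ* − c_γ*. Then for every q ∈ ℕ∪{0}, span{d_γ* : γ ∈ Γ_q} = span{e_γ* : γ ∈ Γ_q}. In particular, the closed linear span of (d_γ*)_{γ∈Γ} in 𝔛* is C-isomorphic to ℓ1. -/
open scoped ENNReal
open Filter Topology

set_option maxHeartbeats 1000000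
set_option synthInstance.maxHeartbeats 400000

noncomputable section

namespace BD

variable {Γ : Type*}

noncomputable instance (priority := 10000) instDualSubNACG (S : System Γ)
    (p : Submodule ℝ (↥S.space →L[ℝ] ℝ)) : NormedAddCommGroup ↥p := inferInstance

noncomputable instance (priority := 10000) instDualSubNS (S : System Γ)
    (p : Submodule ℝ (↥S.space →L[ℝ] ℝ)) : NormedSpace ℝ ↥p := inferInstance

/-- The closed linear span of the biorthogonal functionals `(d_γ^*)_{γ∈Γ}` in the dual of the
Bourgain–Delbaen space. -/
def dstarSpan (S : System Γ) : Submodule ℝ (↥S.space →L[ℝ] ℝ) :=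
  (Submodule.span ℝ (Set.range (dstar S))).topologicalClosure

end BD

/-! The functionals `c_γ^*` only involve coordinates of strictly smaller rank, so an induction on
the rank shows that `d_γ^*` and `e_γ^*` span the same spaces on every `Γ_q`. For the ℓ₁ estimate,
a finite combination `∑ bₙ e_{γₙ}^*` with all `γₙ ∈ Γ_q` is tested against `i_q` of the sign
vector of `b`: this vector lies in `𝔛` and has norm at most `C`, and the test returns `∑ |bₙ|`.
Hence, for an enumeration `n ↦ γₙ` of `Γ`, the norm-one map `a ↦ ∑ aₙ e_{γₙ}^*` is a
`C`-isomorphism from `ℓ₁` onto its (closed) range, which is the closed span of the `e_γ^*`, i.e. of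
the `d_γ^*`. -/

local notation "ℓ¹" => lp (fun _ : ℕ => ℝ) 1

lemma ContinuousLinearMap.apply_eq_sum_smul_single {ι F : Type*} [Fintype ι] [DecidableEq ι]
    [AddCommGroup F] [Module ℝ F] [TopologicalSpace F] (L : (ι → ℝ) →L[ℝ] F) (v : ι → ℝ) :
    L v = ∑ i, v i • L (Pi.single i 1) := by
  conv_lhs => rw [← Finset.univ_sum_single v, map_sum]
  refine Finset.sum_congr rfl fun i _ => ?_
  rw [← map_smul, ← Pi.single_smul', smul_eq_mul, mul_one]

lemma ContinuousLinearMap.exists_equiv_of_range_eq {E F : Type*} [NormedAddCommGroup E]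
    [NormedSpace ℝ E] [NormedAddCommGroup F] [NormedSpace ℝ F] (T : E →L[ℝ] F)
    {P : Submodule ℝ F} (hP : LinearMap.range (T : E →ₗ[ℝ] F) = P) {C : ℝ} (hC : 0 ≤ C)
    (hlow : ∀ x, ‖x‖ ≤ C * ‖T x‖) :
    ∃ U : E ≃L[ℝ] P, ‖(U : E →L[ℝ] P)‖ ≤ ‖T‖ ∧ ‖(U.symm : P →L[ℝ] E)‖ ≤ C := by
  have hinj : Function.Injective T := (injective_iff_map_eq_zero T).2 fun x hx =>
    norm_le_zero_iff.1 (by simpa [hx] using hlow x)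
  let L : E ≃ₗ[ℝ] P := (LinearEquiv.ofInjective _ hinj).trans (LinearEquiv.ofEq _ _ hP)
  have hL (x : E) : ‖L x‖ = ‖T x‖ := rfl
  have hLsymm (y : P) : ‖L.symm y‖ ≤ C * ‖y‖ := by
    simpa only [← hL, L.apply_symm_apply] using hlow (L.symm y)
  let U := L.toContinuousLinearEquivOfBounds ‖T‖ C (fun x => hL x ▸ T.le_opNorm x) hLsymm
  exact ⟨U, U.toContinuousLinearMap.opNorm_le_bound (norm_nonneg T) fun x => hL x ▸ T.le_opNorm x,
    U.symm.toContinuousLinearMap.opNorm_le_bound hC hLsymm⟩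

section SynthesisOperator

variable {F : Type*} [NormedAddCommGroup F] [NormedSpace ℝ F]

lemma lp.one_norm_sum_single (s : Finset ℕ) (b : ℕ → ℝ) :
    ‖∑ n ∈ s, lp.single 1 n (b n)‖ = ∑ n ∈ s, |b n| := by
  simpa using lp.norm_sum_single (E := fun _ : ℕ => ℝ) (p := 1) (by norm_num) b s

lemma lp.one_hasSum_norm (a : ℓ¹) : HasSum (fun n => ‖a n‖) ‖a‖ := by
  simpa using lp.hasSum_norm (p := 1) (by norm_num) a

lemma norm_smul_le_of_norm_le_one {v : ℕ → F} (hv : ∀ n, ‖v n‖ ≤ 1) (a : ℓ¹) (n : ℕ) :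
    ‖a n • v n‖ ≤ ‖a n‖ := by
  simpa [norm_smul] using mul_le_of_le_one_right (norm_nonneg (a n)) (hv n)

lemma ContinuousLinearMap.map_lp_single (T : ℓ¹ →L[ℝ] F) (n : ℕ) (c : ℝ) :
    T (lp.single 1 n c) = c • T (lp.single 1 n 1) := by
  rw [← map_smul, ← lp.single_smul, smul_eq_mul, mul_one]

lemma ContinuousLinearMap.norm_le_of_forall_finset_sum {T : ℓ¹ →L[ℝ] F} {C : ℝ}
    (h : ∀ (s : Finset ℕ) (b : ℕ → ℝ),
      ∑ n ∈ s, |b n| ≤ C * ‖∑ n ∈ s, b n • T (lp.single 1 n 1)‖) (a : ℓ¹) :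
    ‖a‖ ≤ C * ‖T a‖ := by
  have hclosed : IsClosed {x : ℓ¹ | ‖x‖ ≤ C * ‖T x‖} :=
    isClosed_le continuous_norm (continuous_const.mul (continuous_norm.comp T.continuous))
  refine hclosed.mem_of_tendsto (lp.hasSum_single ENNReal.one_ne_top a)
    (Eventually.of_forall fun s => ?_)
  have hTs : T (∑ n ∈ s, lp.single 1 n (a n)) = ∑ n ∈ s, a n • T (lp.single 1 n 1) := by
    rw [map_sum]
    exact Finset.sum_congr rfl fun n _ => T.map_lp_single n (a n)
  simpa only [Set.mem_ofPred_eq, lp.one_norm_sum_single, hTs] using h s a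

lemma ContinuousLinearMap.range_eq_closure_span_single (T : ℓ¹ →L[ℝ] F)
    (hT : IsClosed (Set.range T)) :
    LinearMap.range (T : ℓ¹ →ₗ[ℝ] F) =
      (Submodule.span ℝ (Set.range fun n => T (lp.single 1 n 1))).topologicalClosure := by
  refine le_antisymm ?_ (Submodule.topologicalClosure_minimal _ ?_
    (by rwa [LinearMap.coe_range, ContinuousLinearMap.coe_coe]))
  · rintro _ ⟨a, rfl⟩
    refine mem_closure_of_tendsto ((lp.hasSum_single ENNReal.one_ne_top a).mapL T)
      (Eventually.of_forall fun s => Submodule.sum_mem _ fun n _ => ?_)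
    rw [T.map_lp_single]
    exact Submodule.smul_mem _ _ (Submodule.subset_span ⟨n, rfl⟩)
  · exact Submodule.span_le.2 (Set.range_subset_iff.2 fun n => ⟨_, rfl⟩)

variable [CompleteSpace F]

lemma summable_smul_of_norm_le_one {v : ℕ → F} (hv : ∀ n, ‖v n‖ ≤ 1) (a : ℓ¹) :
    Summable fun n => a n • v n :=
  .of_norm_bounded (lp.one_hasSum_norm a).summable (norm_smul_le_of_norm_le_one hv a)

def l1Synth (v : ℕ → F) (hv : ∀ n, ‖v n‖ ≤ 1) : ℓ¹ →L[ℝ] F :=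
  LinearMap.mkContinuous
    { toFun a := ∑' n, a n • v n
      map_add' a b := by
        simp only [lp.coeFn_add, Pi.add_apply, add_smul]
        exact (summable_smul_of_norm_le_one hv a).tsum_add (summable_smul_of_norm_le_one hv b)
      map_smul' c a := by
        simp only [lp.coeFn_smul, Pi.smul_apply, smul_eq_mul, mul_smul, RingHom.id_apply]
        exact (summable_smul_of_norm_le_one hv a).tsum_const_smul c }
    1 fun a => by
      simpa using tsum_of_norm_bounded (lp.one_hasSum_norm a) (norm_smul_le_of_norm_le_one hv a)

lemma l1Synth_apply {v : ℕ → F} (hv : ∀ n, ‖v n‖ ≤ 1) (a : ℓ¹) :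
    l1Synth v hv a = ∑' n, a n • v n := rfl

lemma norm_l1Synth_le {v : ℕ → F} (hv : ∀ n, ‖v n‖ ≤ 1) : ‖l1Synth v hv‖ ≤ 1 :=
  LinearMap.mkContinuous_norm_le _ zero_le_one _

lemma l1Synth_single {v : ℕ → F} (hv : ∀ n, ‖v n‖ ≤ 1) (n : ℕ) :
    l1Synth v hv (lp.single 1 n 1) = v n := by
  rw [l1Synth_apply, tsum_eq_single n fun m hm => by simp [hm]]
  simp

end SynthesisOperator

namespace BD

variable {Γ : Type*} (S : System Γ)

@[simp]
lemma restrCLM_apply (A : Finset Γ) (f : Linf Γ) (γ : ↥A) : restrCLM A f γ = f γ := rfl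

lemma System.rk_le {γ : Γ} {q : ℕ} (h : γ ∈ S.Γs q) : S.rk γ ≤ q := by
  classical
  exact Nat.find_le h

lemma System.mem_Γs_rk (γ : Γ) : γ ∈ S.Γs (S.rk γ) := by
  classical
  exact Nat.find_spec (S.covers γ)

lemma System.lt_rk_of_notMem {γ : Γ} {q : ℕ} (h : γ ∉ S.Γs q) : q < S.rk γ :=
  not_le.1 fun hle => h (S.strict.monotone hle (S.mem_Γs_rk γ))

lemma System.dvec_eq_s6 {q : ℕ} [DecidableEq ↥(S.Γs q)] (γ : ↥(S.Γs q)) (h : S.rk γ = q) :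
    S.dvec γ = S.i q (Pi.single γ 1) := by
  classical
  rw [System.dvec, h]
  congr 1
  funext δ
  simp only [Pi.single_apply, Subtype.ext_iff]

lemma System.i_mem_span_dvec_of_rk_eq {q : ℕ} (v : ↥(S.Γs q) → ℝ)
    (hv : ∀ γ : ↥(S.Γs q), v γ ≠ 0 → S.rk γ = q) :
    S.i q v ∈ Submodule.span ℝ (Set.range S.dvec) := by
  classical
  rw [(S.i q).apply_eq_sum_smul_single]
  refine Submodule.sum_mem _ fun γ _ => ?_
  by_cases hγ : v γ = 0
  · simp [hγ]
  · rw [← S.dvec_eq_s6 γ (hv γ hγ)]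
    exact Submodule.smul_mem _ _ (Submodule.subset_span ⟨γ, rfl⟩)

lemma System.i_mem_span_dvec (q : ℕ) (v : ↥(S.Γs q) → ℝ) :
    S.i q v ∈ Submodule.span ℝ (Set.range S.dvec) := by
  induction q with
  | zero => exact S.i_mem_span_dvec_of_rk_eq v fun γ _ => Nat.le_zero.1 (S.rk_le γ.2)
  | succ q ih =>
    set y : ↥(S.Γs q) → ℝ := fun γ => v ⟨γ, S.strict.monotone q.le_succ γ.2⟩
    set u := restrCLM (S.Γs (q + 1)) (S.i q y)
    have hsplit : S.i (q + 1) v = S.i q y + S.i (q + 1) (v - u) := by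
      rw [map_sub, ← S.compat q (q + 1) q.lt_succ_self y]
      abel
    rw [hsplit]
    refine Submodule.add_mem _ (ih y) (S.i_mem_span_dvec_of_rk_eq _ fun γ hγ => ?_)
    have hγq : (γ : Γ) ∉ S.Γs q := fun hmem => hγ <| by
      simp [u, y, S.extension q y ⟨γ, hmem⟩]
    exact le_antisymm (S.rk_le γ.2) (S.lt_rk_of_notMem hγq)

lemma System.i_mem_space (q : ℕ) (v : ↥(S.Γs q) → ℝ) : S.i q v ∈ S.space :=
  Submodule.le_topologicalClosure _ (S.i_mem_span_dvec q v)

lemma cAt_eq_sum (p : ℕ) [DecidableEq ↥(S.Γs p)] (γ : Γ) :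
    cAt S p γ = ∑ δ : ↥(S.Γs p), S.i p (Pi.single δ 1) γ • evalS S δ := by
  ext x
  change S.i p (restrCLM _ x.1) γ = _
  rw [(S.i p).apply_eq_sum_smul_single]
  simp only [restrCLM_apply, lp.coeFn_sum, Finset.sum_apply, lp.coeFn_smul, Pi.smul_apply,
    smul_eq_mul, sum_apply]
  exact Finset.sum_congr rfl fun δ _ => mul_comm _ _

lemma cstar_mem_span_evalS {γ : Γ} {p : ℕ} (hγ : S.rk γ = p + 1) :
    cstar S γ ∈ Submodule.span ℝ (evalS S '' (S.Γs p : Set Γ)) := by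
  classical
  rw [cstar, if_neg (by omega), hγ, Nat.add_sub_cancel, cAt_eq_sum]
  exact Submodule.sum_mem _ fun δ _ =>
    Submodule.smul_mem _ _ (Submodule.subset_span ⟨δ, δ.2, rfl⟩)

lemma dstar_mem_span_evalS {q : ℕ} {γ : Γ} (hγ : γ ∈ S.Γs q) :
    dstar S γ ∈ Submodule.span ℝ (evalS S '' (S.Γs q : Set Γ)) := by
  refine Submodule.sub_mem _ (Submodule.subset_span ⟨γ, hγ, rfl⟩) ?_
  cases hrk : S.rk γ with
  | zero => simp [cstar, hrk]
  | succ p =>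
    refine Submodule.span_mono (Set.image_mono fun δ hδ => ?_) (cstar_mem_span_evalS S hrk)
    exact S.strict.monotone (by have := S.rk_le hγ; omega) hδ

lemma evalS_mem_span_dstar {q : ℕ} {γ : Γ} (hγ : γ ∈ S.Γs q) :
    evalS S γ ∈ Submodule.span ℝ (dstar S '' (S.Γs q : Set Γ)) := by
  induction hrk : S.rk γ using Nat.strong_induction_on generalizing γ with
  | _ n ih =>
  have hsum : evalS S γ = dstar S γ + cstar S γ := by rw [dstar, sub_add_cancel]
  rw [hsum]
  refine Submodule.add_mem _ (Submodule.subset_span ⟨γ, hγ, rfl⟩) ?_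
  cases n with
  | zero => simp [cstar, hrk]
  | succ p =>
    refine Submodule.span_le.2 ?_ (cstar_mem_span_evalS S hrk)
    rintro _ ⟨δ, hδ, rfl⟩
    have hpq : p + 1 ≤ q := hrk ▸ S.rk_le hγ
    exact ih _ (Nat.lt_succ_of_le (S.rk_le hδ)) (S.strict.monotone (by omega) hδ) rfl

lemma span_dstar_image_eq (q : ℕ) :
    Submodule.span ℝ (dstar S '' (S.Γs q : Set Γ)) =
      Submodule.span ℝ (evalS S '' (S.Γs q : Set Γ)) :=
  le_antisymm (Submodule.span_le.2 <| Set.image_subset_iff.2 fun _ => dstar_mem_span_evalS S)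
    (Submodule.span_le.2 <| Set.image_subset_iff.2 fun _ => evalS_mem_span_dstar S)

lemma span_range_dstar_eq :
    Submodule.span ℝ (Set.range (dstar S)) = Submodule.span ℝ (Set.range (evalS S)) :=
  le_antisymm
    (Submodule.span_le.2 <| Set.range_subset_iff.2 fun γ => Submodule.span_mono
      (Set.image_subset_range _ _) (dstar_mem_span_evalS S (S.mem_Γs_rk γ)))
    (Submodule.span_le.2 <| Set.range_subset_iff.2 fun γ => Submodule.span_mono
      (Set.image_subset_range _ _) (evalS_mem_span_dstar S (S.mem_Γs_rk γ)))

lemma System.C_nonneg : 0 ≤ S.C := Real.iSup_nonneg fun q => norm_nonneg (S.i q)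

lemma System.norm_i_le (q : ℕ) : ‖S.i q‖ ≤ S.C := le_ciSup S.bdd q

lemma System.countable (S : System Γ) : Countable Γ :=
  Function.Surjective.countable (f := fun γ : Σ q, ↥(S.Γs q) => (γ.2 : Γ)) fun γ =>
    let ⟨q, hq⟩ := S.covers γ; ⟨⟨q, γ, hq⟩, rfl⟩

lemma System.infinite (S : System Γ) : Infinite Γ := by
  have : Infinite (Finset Γ) := Infinite.of_injective _ S.strict.injective
  by_contra hfin
  rw [not_infinite_iff_finite] at hfin
  exact not_finite (Finset Γ)

lemma norm_evalS_le (γ : Γ) : ‖evalS S γ‖ ≤ 1 :=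
  ContinuousLinearMap.opNorm_le_bound _ zero_le_one fun x => by
    rw [one_mul]
    exact lp.norm_apply_le_norm ENNReal.top_ne_zero (x : Linf Γ) γ

lemma sum_abs_le_mul_norm_sum_evalS (e : ℕ ≃ Γ) (s : Finset ℕ) (b : ℕ → ℝ) :
    ∑ n ∈ s, |b n| ≤ S.C * ‖∑ n ∈ s, b n • evalS S (e n)‖ := by
  set q := s.sup fun n => S.rk (e n)
  have hmem {n : ℕ} (hn : n ∈ s) : e n ∈ S.Γs q :=
    S.strict.monotone (Finset.le_sup (f := fun n => S.rk (e n)) hn) (S.mem_Γs_rk (e n))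
  set x : ↥(S.Γs q) → ℝ := fun δ => SignType.sign (b (e.symm δ))
  have hx : ‖x‖ ≤ 1 := (pi_norm_le_iff_of_nonneg zero_le_one).2 fun δ => by
    simp only [x]
    generalize SignType.sign (b (e.symm δ)) = t
    rcases t with _ | _ | _ <;> simp
  set w : ↥S.space := ⟨S.i q x, S.i_mem_space q x⟩
  have hw : ‖w‖ ≤ S.C := calc
    ‖S.i q x‖ ≤ ‖S.i q‖ * ‖x‖ := (S.i q).le_opNorm x
    _ ≤ S.C * 1 := mul_le_mul (S.norm_i_le q) hx (norm_nonneg _) S.C_nonneg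
    _ = S.C := mul_one _
  have hpair : (∑ n ∈ s, b n • evalS S (e n)) w = ∑ n ∈ s, |b n| := by
    simp only [FunLike.coe_sum, Finset.sum_apply, FunLike.coe_smul,
      Pi.smul_apply, smul_eq_mul]
    refine Finset.sum_congr rfl fun n hn => ?_
    have hwn : evalS S (e n) w = x ⟨e n, hmem hn⟩ := S.extension q x ⟨e n, hmem hn⟩
    simp [hwn, x]
  calc ∑ n ∈ s, |b n| = (∑ n ∈ s, b n • evalS S (e n)) w := hpair.symm
    _ ≤ ‖∑ n ∈ s, b n • evalS S (e n)‖ * ‖w‖ := (le_abs_self _).trans <| by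
        rw [← Real.norm_eq_abs]; exact ContinuousLinearMap.le_opNorm _ w
    _ ≤ S.C * ‖∑ n ∈ s, b n • evalS S (e n)‖ := by
      rw [mul_comm]; exact mul_le_mul_of_nonneg_right hw (norm_nonneg _)

def evalSynth (e : ℕ ≃ Γ) : ℓ¹ →L[ℝ] (↥S.space →L[ℝ] ℝ) :=
  l1Synth (fun n => evalS S (e n)) fun n => norm_evalS_le S (e n)

lemma norm_le_mul_norm_evalSynth (e : ℕ ≃ Γ) (a : ℓ¹) : ‖a‖ ≤ S.C * ‖evalSynth S e a‖ :=
  ContinuousLinearMap.norm_le_of_forall_finset_sum (fun s b => by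
    simpa only [evalSynth, l1Synth_single] using sum_abs_le_mul_norm_sum_evalS S e s b) a

lemma range_evalSynth (e : ℕ ≃ Γ) :
    LinearMap.range (evalSynth S e : ℓ¹ →ₗ[ℝ] (↥S.space →L[ℝ] ℝ)) = dstarSpan S := by
  have hclosed : IsClosed (Set.range (evalSynth S e)) := by
    refine (ContinuousLinearMap.antilipschitz_of_bound _ (K := S.C.toNNReal) fun a => ?_)
      |>.isClosed_range (evalSynth S e).uniformContinuous
    rw [Real.coe_toNNReal _ S.C_nonneg]
    exact norm_le_mul_norm_evalSynth S e a
  rw [(evalSynth S e).range_eq_closure_span_single hclosed, dstarSpan, span_range_dstar_eq]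
  simp only [evalSynth, l1Synth_single]
  congr 2
  exact e.surjective.range_comp (evalS S)

end BD

/-- In a Bourgain–Delbaen space with `C = sup_q ‖i_q‖`, for every `q` the span
of `{d_γ^* : γ ∈ Γ_q}` equals the span of `{e_γ^* : γ ∈ Γ_q}`; in particular the closed linear
span of `(d_γ^*)_{γ∈Γ}` in the dual is `C`-isomorphic to `ℓ1`. -/
theorem statement6 {Γ : Type*} (S : BD.System Γ) :
    (∀ q : ℕ, Submodule.span ℝ (BD.dstar S '' (S.Γs q : Set Γ)) =
      Submodule.span ℝ (BD.evalS S '' (S.Γs q : Set Γ))) ∧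
    (∃ T : ↥(BD.dstarSpan S) ≃L[ℝ] lp (fun _ : ℕ => ℝ) 1,
      ‖(T : ↥(BD.dstarSpan S) →L[ℝ] lp (fun _ : ℕ => ℝ) 1)‖ *
        ‖(T.symm : lp (fun _ : ℕ => ℝ) 1 →L[ℝ] ↥(BD.dstarSpan S))‖ ≤ S.C) := by
  refine ⟨BD.span_dstar_image_eq S, ?_⟩
  have := S.countable
  have := S.infinite
  obtain ⟨e⟩ : Nonempty (ℕ ≃ Γ) := nonempty_equiv_of_countable
  obtain ⟨U, hU, hUsymm⟩ := (BD.evalSynth S e).exists_equiv_of_range_eq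
    (BD.range_evalSynth S e) S.C_nonneg (BD.norm_le_mul_norm_evalSynth S e)
  refine ⟨U.symm, ?_⟩
  rw [ContinuousLinearEquiv.symm_symm]
  calc _ ≤ S.C * 1 := mul_le_mul hUsymm (hU.trans (norm_l1Synth_le _)) (norm_nonneg _) S.C_nonneg
    _ = S.C := mul_one _
end
end
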